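/- arXiv:2109.06943 — 3 statements merged into one kernel-verified Lean document; each statement's English description precedes it below -/
import Mathlib

section
/- Harnack's inequality for the disc: if v is a positive harmonic function on the open unit disc in ℂ, then for all 0 ≤ r < 1 and t ∈ ℝ, ((1−r)/(1+r)) v(0) ≤ v(r e^{it}) ≤ ((1+r)/(1−r)) v(0). -/
open Complex Metric

/-- The Laplacian `Δv = v_xx + v_yy` of a function `v : ℂ → ℝ`, computed via iterated
directional derivatives in the directions `1` and `I`. -/
noncomputable def lap (v : ℂ → ℝ) (z : ℂ) : ℝ :=
  fderiv ℝ (fun w => fderiv ℝ v w 1) z 1 +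
  fderiv ℝ (fun w => fderiv ℝ v w Complex.I) z Complex.I

/-!
A positive harmonic function `v` on the disc is the real part of a holomorphic `f` with
`f 0 = v 0 =: a > 0`. The Cayley transform `φ = (f - a) / (f + a)` maps the disc into itself and
fixes `0`, so `‖φ z‖ ≤ ‖z‖` by the Schwarz lemma. Inverting, `v z = a · Re ((1 + φ z) / (1 - φ z))`,
and `Re ((1 + w) / (1 - w)) = (1 - ‖w‖²) / ‖1 - w‖²` lies between `(1 - r) / (1 + r)` and
`(1 + r) / (1 - r)` whenever `‖w‖ ≤ r < 1`.
-/

open InnerProductSpace Laplacian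

theorem lap_eq_laplacian {v : ℂ → ℝ} {z : ℂ} (hv : DifferentiableAt ℝ (fderiv ℝ v) z) :
    lap v z = Δ v z := by
  simp [lap, laplacian_eq_iteratedFDeriv_complexPlane, iteratedFDeriv_two_apply,
    fderiv_clm_apply hv (differentiableAt_const _)]

theorem harmonicOnNhd_of_lap_eq_zero {v : ℂ → ℝ} {s : Set ℂ} (hs : IsOpen s)
    (hv : ContDiffOn ℝ 2 v s) (hlap : ∀ z ∈ s, lap v z = 0) : HarmonicOnNhd v s := by
  intro z hz
  refine ⟨hv.contDiffAt (hs.mem_nhds hz), ?_⟩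
  filter_upwards [hs.mem_nhds hz] with w hw
  have hvw : ContDiffAt ℝ 2 v w := hv.contDiffAt (hs.mem_nhds hw)
  rw [← lap_eq_laplacian ((hvw.fderiv_right le_rfl).differentiableAt one_ne_zero), hlap w hw]
  rfl

theorem re_one_add_div_one_sub_mem_Icc {w : ℂ} {r : ℝ} (hw : ‖w‖ ≤ r) (hr : r < 1) :
    (1 - r) / (1 + r) ≤ ((1 + w) / (1 - w)).re ∧ ((1 + w) / (1 - w)).re ≤ (1 + r) / (1 - r) := by
  obtain ⟨hlo, hhi⟩ := abs_le.mp ((abs_re_le_norm w).trans hw)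
  have hsq : w.re ^ 2 + w.im ^ 2 ≤ r ^ 2 := by
    rw [sq, sq, ← normSq_apply, ← Complex.sq_norm]
    exact pow_le_pow_left₀ (norm_nonneg w) hw 2
  have hN : 0 < (1 - w.re) ^ 2 + w.im ^ 2 := by nlinarith
  have hval : ((1 + w) / (1 - w)).re =
      (1 - (w.re ^ 2 + w.im ^ 2)) / ((1 - w.re) ^ 2 + w.im ^ 2) := by
    rw [div_re, ← add_div, normSq_apply]
    simp only [add_re, sub_re, one_re, add_im, sub_im, one_im]
    congr 1 <;> ring
  rw [hval, div_le_div_iff₀ (by linarith) hN, div_le_div_iff₀ hN (by linarith)]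
  constructor
  · nlinarith [mul_nonneg (by linarith : (0:ℝ) ≤ 1 - r) (by linarith : (0:ℝ) ≤ w.re + r)]
  · nlinarith [mul_nonneg (by linarith : (0:ℝ) ≤ 1 - w.re) (by linarith : (0:ℝ) ≤ r - w.re)]

theorem norm_sub_ofReal_lt_norm_add_ofReal {z : ℂ} {a : ℝ} (hz : 0 < z.re) (ha : 0 < a) :
    ‖z - a‖ < ‖z + a‖ := by
  rw [← sq_lt_sq₀ (norm_nonneg _) (norm_nonneg _), Complex.sq_norm, Complex.sq_norm,
    normSq_apply, normSq_apply]
  simp only [sub_re, sub_im, add_re, add_im, ofReal_re, ofReal_im]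
  nlinarith [mul_pos hz ha]

theorem harnack_re_of_map_zero_eq_ofReal {f : ℂ → ℂ} {a : ℝ}
    (hf : DifferentiableOn ℂ f (ball 0 1)) (hre : ∀ z ∈ ball 0 1, 0 < (f z).re)
    (hf0 : f 0 = a) {z : ℂ} (hz : z ∈ ball 0 1) :
    (1 - ‖z‖) / (1 + ‖z‖) * a ≤ (f z).re ∧ (f z).re ≤ (1 + ‖z‖) / (1 - ‖z‖) * a := by
  have ha : 0 < a := by simpa [hf0] using hre 0 (mem_ball_self one_pos)
  have hden : ∀ z ∈ ball (0 : ℂ) 1, f z + a ≠ 0 := fun z hz h =>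
    (add_pos (hre z hz) ha).ne' (by simpa using congrArg re h)
  set φ : ℂ → ℂ := fun z => (f z - a) / (f z + a)
  have hφ_maps : Set.MapsTo φ (ball 0 1) (closedBall 0 1) := fun z hz => by
    rw [mem_closedBall_zero_iff, norm_div, div_le_one (norm_pos_iff.mpr (hden z hz))]
    exact (norm_sub_ofReal_lt_norm_add_ofReal (hre z hz) ha).le
  have hschwarz : ‖φ z‖ ≤ ‖z‖ :=
    Complex.norm_le_norm_of_mapsTo_ball ((hf.sub_const _).div (hf.add_const _) hden) hφ_maps
      (by simp [φ, hf0]) (mem_ball_zero_iff.mp hz)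
  have hφ_inv : (1 + φ z) / (1 - φ z) = f z / a := by
    have hfa := hden z hz
    have ha' : (a : ℂ) ≠ 0 := ofReal_ne_zero.mpr ha.ne'
    simp only [φ]
    rw [show 1 + (f z - a) / (f z + a) = 2 * f z / (f z + a) by field_simp; ring,
      show 1 - (f z - a) / (f z + a) = 2 * a / (f z + a) by field_simp; ring]
    field_simp
  obtain ⟨hlo, hhi⟩ := re_one_add_div_one_sub_mem_Icc hschwarz (mem_ball_zero_iff.mp hz)
  rw [hφ_inv, div_ofReal_re] at hlo hhi
  exact ⟨(le_div_iff₀ ha).mp hlo, (div_le_iff₀ ha).mp hhi⟩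

theorem harnack_re {f : ℂ → ℂ} (hf : DifferentiableOn ℂ f (ball 0 1))
    (hre : ∀ z ∈ ball 0 1, 0 < (f z).re) {z : ℂ} (hz : z ∈ ball 0 1) :
    (1 - ‖z‖) / (1 + ‖z‖) * (f 0).re ≤ (f z).re ∧
      (f z).re ≤ (1 + ‖z‖) / (1 - ‖z‖) * (f 0).re := by
  simpa using harnack_re_of_map_zero_eq_ofReal (f := fun z => f z - (f 0).im * I)
    (hf.sub_const _) (by simpa using hre) (by simp [sub_eq_iff_eq_add, re_add_im]) hz

theorem InnerProductSpace.HarmonicOnNhd.harnack {v : ℂ → ℝ} (hv : HarmonicOnNhd v (ball 0 1))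
    (hpos : ∀ z ∈ ball 0 1, 0 < v z) {z : ℂ} (hz : z ∈ ball 0 1) :
    (1 - ‖z‖) / (1 + ‖z‖) * v 0 ≤ v z ∧ v z ≤ (1 + ‖z‖) / (1 - ‖z‖) * v 0 := by
  obtain ⟨F, hF, hFv⟩ := hv.exists_analyticOnNhd_ball_re_eq
  have hFv' : ∀ w ∈ ball (0 : ℂ) 1, (F w).re = v w := hFv
  have := harnack_re hF.differentiableOn (fun w hw => (hFv' w hw).symm ▸ hpos w hw) hz
  rwa [hFv' z hz, hFv' 0 (mem_ball_self one_pos)] at this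

/-- Harnack's inequality on the unit disc: if `v` is a positive harmonic function on the
open unit disc, then `((1-r)/(1+r)) v(0) ≤ v(r e^{it}) ≤ ((1+r)/(1-r)) v(0)` for all
`0 ≤ r < 1` and `t ∈ ℝ`. -/
theorem stmt1 (v : ℂ → ℝ)
    (hC2 : ContDiffOn ℝ 2 v (ball (0:ℂ) 1))
    (hharm : ∀ z ∈ ball (0:ℂ) 1, lap v z = 0)
    (hpos : ∀ z ∈ ball (0:ℂ) 1, 0 < v z)
    (r t : ℝ) (hr0 : 0 ≤ r) (hr1 : r < 1) :
    ((1 - r) / (1 + r)) * v 0 ≤ v ((r : ℂ) * Complex.exp (t * Complex.I)) ∧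
    v ((r : ℂ) * Complex.exp (t * Complex.I)) ≤ ((1 + r) / (1 - r)) * v 0 := by
  have hnorm : ‖(r : ℂ) * exp (t * I)‖ = r := by
    simp [norm_exp_ofReal_mul_I, abs_of_nonneg hr0]
  have := (harmonicOnNhd_of_lap_eq_zero isOpen_ball hC2 hharm).harnack hpos
    (mem_ball_zero_iff.mpr (hnorm ▸ hr1))
  rwa [hnorm] at this
end

section
/- If u is a C² minimal plurisubharmonic function on a domain Ω ⊂ ℝⁿ and f : D → Ω is a conformal harmonic map from the unit disc, then u ∘ f is subharmonic on D. -/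
open Metric RealInnerProductSpace

/-- The (vector-valued) Laplacian of a map `f : ℂ → ℝⁿ`. -/
noncomputable def lapV (n : ℕ) (f : ℂ → EuclideanSpace ℝ (Fin n)) (z : ℂ) :
    EuclideanSpace ℝ (Fin n) :=
  fderiv ℝ (fun w => fderiv ℝ f w 1) z 1 +
  fderiv ℝ (fun w => fderiv ℝ f w Complex.I) z Complex.I

/-- A map `f : ℂ → ℝⁿ` is conformal harmonic on a set `s` if it is `C²`, harmonic, and
`|f_x| = |f_y|`, `f_x · f_y = 0` at every point of `s`. -/
def ConformalHarmonicOn (n : ℕ) (f : ℂ → EuclideanSpace ℝ (Fin n)) (s : Set ℂ) : Prop :=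
  ContDiffOn ℝ 2 f s ∧ (∀ z ∈ s, lapV n f z = 0) ∧
  ∀ z ∈ s, ‖fderiv ℝ f z 1‖ = ‖fderiv ℝ f z Complex.I‖ ∧
    ⟪fderiv ℝ f z 1, fderiv ℝ f z Complex.I⟫ = 0

/-- The Hessian bilinear form of `u : ℝⁿ → ℝ` at `x`, applied to vectors `v, w`. -/
noncomputable def hess (n : ℕ) (u : EuclideanSpace ℝ (Fin n) → ℝ)
    (x v w : EuclideanSpace ℝ (Fin n)) : ℝ :=
  fderiv ℝ (fun y => fderiv ℝ u y v) x w

/-- A `C²` function is minimal plurisubharmonic on `s` if the trace of the restriction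
of its Hessian to every 2-plane is nonnegative at each point of `s`. -/
def MPSHOn (n : ℕ) (u : EuclideanSpace ℝ (Fin n) → ℝ)
    (s : Set (EuclideanSpace ℝ (Fin n))) : Prop :=
  ∀ x ∈ s, ∀ v w : EuclideanSpace ℝ (Fin n), ‖v‖ = 1 → ‖w‖ = 1 → ⟪v, w⟫ = 0 →
    0 ≤ hess n u x v v + hess n u x w w

/-!
By the chain rule, `Δ(u ∘ f) = Hess u (f_x, f_x) + Hess u (f_y, f_y) + du (Δf)`. The last term
vanishes because `f` is harmonic. Conformality says that `f_x = c v` and `f_y = c w` for an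
orthonormal pair `v, w` and `c = |f_x|`, so the first two terms add up to `c²` times the trace of
`Hess u` on the plane spanned by `v, w`, which is nonnegative since `u` is minimal plurisubharmonic.
-/

section SecondDerivative

variable {𝕜 : Type*} [NontriviallyNormedField 𝕜]
  {E F G : Type*} [NormedAddCommGroup E] [NormedSpace 𝕜 E] [NormedAddCommGroup F]
  [NormedSpace 𝕜 F] [NormedAddCommGroup G] [NormedSpace 𝕜 G]

theorem fderiv_fderiv_comp_apply_apply {u : F → G} {f : E → F} {z : E} (v : E)
    (hu : ContDiffAt 𝕜 2 u (f z)) (hf : ContDiffAt 𝕜 2 f z) :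
    fderiv 𝕜 (fun w => fderiv 𝕜 (u ∘ f) w v) z v =
      fderiv 𝕜 (fderiv 𝕜 u) (f z) (fderiv 𝕜 f z v) (fderiv 𝕜 f z v) +
        fderiv 𝕜 u (f z) (fderiv 𝕜 (fun w => fderiv 𝕜 f w v) z v) := by
  have hu_near : ∀ᶠ w in nhds z, ContDiffAt 𝕜 2 u (f w) :=
    hf.continuousAt.eventually (hu.eventually (by simp))
  have hcomp : (fun w => fderiv 𝕜 (u ∘ f) w v) =ᶠ[nhds z]
      fun w => fderiv 𝕜 u (f w) (fderiv 𝕜 f w v) := by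
    filter_upwards [hf.eventually (by simp), hu_near] with w hfw huw
    rw [fderiv_comp w (huw.differentiableAt two_ne_zero) (hfw.differentiableAt two_ne_zero)]
    rfl
  have hdf : DifferentiableAt 𝕜 f z := hf.differentiableAt two_ne_zero
  have hddf : DifferentiableAt 𝕜 (fderiv 𝕜 f) z :=
    (hf.fderiv_right (m := 1) le_rfl).differentiableAt one_ne_zero
  have hddu : DifferentiableAt 𝕜 (fderiv 𝕜 u) (f z) :=
    (hu.fderiv_right (m := 1) le_rfl).differentiableAt one_ne_zero
  have hdu_comp : DifferentiableAt 𝕜 (fun w => fderiv 𝕜 u (f w)) z := hddu.comp z hdf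
  rw [hcomp.fderiv_eq, fderiv_clm_apply hdu_comp (hddf.clm_apply (differentiableAt_const v)),
    show fderiv 𝕜 (fun w => fderiv 𝕜 u (f w)) z = _ from fderiv_comp z hddu hdf]
  simp only [add_apply, ContinuousLinearMap.coe_comp, Function.comp_apply,
    ContinuousLinearMap.flip_apply]
  exact add_comm _ _

end SecondDerivative

section Hessian

variable {n : ℕ}

theorem hess_eq_fderiv_fderiv {u : EuclideanSpace ℝ (Fin n) → ℝ} {x : EuclideanSpace ℝ (Fin n)}
    (hu : DifferentiableAt ℝ (fderiv ℝ u) x) (v w : EuclideanSpace ℝ (Fin n)) :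
    hess n u x v w = fderiv ℝ (fderiv ℝ u) x w v := by
  rw [hess, fderiv_clm_apply hu (differentiableAt_const v)]
  simp

theorem hess_smul_smul (u : EuclideanSpace ℝ (Fin n) → ℝ) (x v : EuclideanSpace ℝ (Fin n))
    (c : ℝ) : hess n u x (c • v) (c • v) = c ^ 2 * hess n u x v v := by
  have hscale : (fun y => fderiv ℝ u y (c • v)) = c • fun y => fderiv ℝ u y v := by
    ext y
    simp
  rw [hess, hscale, fderiv_const_smul_field, hess]
  simp only [Pi.smul_apply, smul_apply, map_smul, smul_eq_mul]
  ring

theorem lap_comp {u : EuclideanSpace ℝ (Fin n) → ℝ} {f : ℂ → EuclideanSpace ℝ (Fin n)} {z : ℂ}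
    (hu : ContDiffAt ℝ 2 u (f z)) (hf : ContDiffAt ℝ 2 f z) :
    lap (u ∘ f) z =
      hess n u (f z) (fderiv ℝ f z 1) (fderiv ℝ f z 1) +
        hess n u (f z) (fderiv ℝ f z Complex.I) (fderiv ℝ f z Complex.I) +
          fderiv ℝ u (f z) (lapV n f z) := by
  have hddu : DifferentiableAt ℝ (fderiv ℝ u) (f z) :=
    (hu.fderiv_right (m := 1) le_rfl).differentiableAt one_ne_zero
  rw [lap, lapV, fderiv_fderiv_comp_apply_apply 1 hu hf,
    fderiv_fderiv_comp_apply_apply Complex.I hu hf, map_add, hess_eq_fderiv_fderiv hddu,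
    hess_eq_fderiv_fderiv hddu]
  ring

theorem MPSHOn.hess_add_hess_nonneg {u : EuclideanSpace ℝ (Fin n) → ℝ}
    {s : Set (EuclideanSpace ℝ (Fin n))} (hu : MPSHOn n u s) {x : EuclideanSpace ℝ (Fin n)}
    (hx : x ∈ s) {a b : EuclideanSpace ℝ (Fin n)} (hab : ‖a‖ = ‖b‖) (hinner : ⟪a, b⟫ = 0) :
    0 ≤ hess n u x a a + hess n u x b b := by
  rcases (norm_nonneg a).eq_or_lt with ha | hc
  · have hb : b = 0 := norm_eq_zero.mp (hab ▸ ha.symm)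
    simp [hess, norm_eq_zero.mp ha.symm, hb]
  · set c := ‖a‖
    have hunit : ∀ y : EuclideanSpace ℝ (Fin n), ‖y‖ = c → ‖c⁻¹ • y‖ = 1 := fun y hy => by
      rw [norm_smul, hy, Real.norm_eq_abs, abs_of_pos (inv_pos.mpr hc), inv_mul_cancel₀ hc.ne']
    have hrescale : ∀ y : EuclideanSpace ℝ (Fin n), c • (c⁻¹ • y) = y := fun y => by
      rw [smul_smul, mul_inv_cancel₀ hc.ne', one_smul]
    have horth : ⟪c⁻¹ • a, c⁻¹ • b⟫ = 0 := by
      rw [real_inner_smul_left, real_inner_smul_right, hinner, mul_zero, mul_zero]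
    calc 0 ≤ c ^ 2 * (hess n u x (c⁻¹ • a) (c⁻¹ • a) + hess n u x (c⁻¹ • b) (c⁻¹ • b)) :=
          mul_nonneg (sq_nonneg c) (hu x hx _ _ (hunit a rfl) (hunit b hab.symm) horth)
      _ = hess n u x a a + hess n u x b b := by
          rw [mul_add, ← hess_smul_smul, ← hess_smul_smul, hrescale, hrescale]

end Hessian

theorem stmt5_general (n : ℕ) (Ω : Set (EuclideanSpace ℝ (Fin n)))
    (hΩ : IsOpen Ω) (u : EuclideanSpace ℝ (Fin n) → ℝ)
    (hu : ContDiffOn ℝ 2 u Ω) (hmpsh : MPSHOn n u Ω)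
    (f : ℂ → EuclideanSpace ℝ (Fin n))
    (hf : ConformalHarmonicOn n f (ball (0:ℂ) 1))
    (hfΩ : Set.MapsTo f (ball (0:ℂ) 1) Ω) :
    ∀ z ∈ ball (0:ℂ) 1, 0 ≤ lap (u ∘ f) z := by
  intro z hz
  obtain ⟨hfC2, hharmonic, hconformal⟩ := hf
  obtain ⟨hnorm, hinner⟩ := hconformal z hz
  have hfz : f z ∈ Ω := hfΩ hz
  rw [lap_comp (hu.contDiffAt (hΩ.mem_nhds hfz)) (hfC2.contDiffAt (isOpen_ball.mem_nhds hz)),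
    hharmonic z hz, map_zero, add_zero]
  exact hmpsh.hess_add_hess_nonneg hfz hnorm hinner

/-- If `u` is a `C²` MPSH function on a domain `Ω ⊆ ℝⁿ` and `f : D → Ω` is a conformal
harmonic map from the unit disc, then `u ∘ f` is subharmonic on `D`
(for `C²` functions: `Δ(u∘f) ≥ 0`). -/
theorem stmt5 (n : ℕ) (hn : 3 ≤ n) (Ω : Set (EuclideanSpace ℝ (Fin n)))
    (hΩ : IsOpen Ω) (u : EuclideanSpace ℝ (Fin n) → ℝ)
    (hu : ContDiffOn ℝ 2 u Ω) (hmpsh : MPSHOn n u Ω)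
    (f : ℂ → EuclideanSpace ℝ (Fin n))
    (hf : ConformalHarmonicOn n f (ball (0:ℂ) 1))
    (hfΩ : Set.MapsTo f (ball (0:ℂ) 1) Ω) :
    ∀ z ∈ ball (0:ℂ) 1, 0 ≤ lap (u ∘ f) z :=
  stmt5_general n Ω hΩ u hu hmpsh f hf hfΩ
end

section
/- Let (v, w) ∈ ℝⁿ × ℝⁿ be an orthonormal conformal frame, i.e., |v| = |w| = 1 and v · w = 0. Write v = (v', v_n) and w = (w', w_n) with v', w' ∈ ℝⁿ⁻¹. Then |v_n| ≤ |w'|. -/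
open RealInnerProductSpace

/-!
By Bessel's inequality for the orthonormal pair `(v, w)` and the last basis vector `eₙ`,
`vₙ² + wₙ² ≤ 1 = |w'|² + wₙ²`.
-/

theorem real_inner_sq_add_inner_sq_le_norm_sq {E : Type*} [NormedAddCommGroup E]
    [InnerProductSpace ℝ E] {v w : E} (hv : ‖v‖ = 1) (hw : ‖w‖ = 1) (hvw : ⟪v, w⟫ = 0)
    (x : E) : ⟪v, x⟫ ^ 2 + ⟪w, x⟫ ^ 2 ≤ ‖x‖ ^ 2 := by
  have hpair : Orthonormal ℝ ![v, w] := by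
    rw [orthonormal_iff_ite]
    intro i j
    fin_cases i <;> fin_cases j <;>
      simp [hv, hw, hvw, real_inner_comm v w]
  simpa using hpair.sum_inner_products_le (s := Finset.univ) (x := x)

theorem EuclideanSpace.sum_castSucc_sq_eq (m : ℕ) (w : EuclideanSpace ℝ (Fin (m + 1))) :
    ∑ i : Fin m, w (Fin.castSucc i) ^ 2 = ‖w‖ ^ 2 - w (Fin.last m) ^ 2 := by
  rw [EuclideanSpace.real_norm_sq_eq, Fin.sum_univ_castSucc]
  ring

/-- Let `(v, w)` be an orthonormal conformal frame in `ℝⁿ` (here `n = m + 1`, with the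
last coordinate singled out): `|v| = |w| = 1` and `v · w = 0`. Writing `v = (v', vₙ)`,
`w = (w', wₙ)`, we have `|vₙ| ≤ |w'|`. -/
theorem stmt11 (m : ℕ) (v w : EuclideanSpace ℝ (Fin (m + 1)))
    (hv : ‖v‖ = 1) (hw : ‖w‖ = 1) (hvw : ⟪v, w⟫ = 0) :
    |v (Fin.last m)| ≤ Real.sqrt (∑ i : Fin m, w (Fin.castSucc i) ^ 2) := by
  have hbessel := real_inner_sq_add_inner_sq_le_norm_sq hv hw hvw
    (EuclideanSpace.single (Fin.last m) (1 : ℝ))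
  simp only [EuclideanSpace.inner_single_right, conj_trivial, one_mul, PiLp.norm_single,
    norm_one, one_pow] at hbessel
  rw [EuclideanSpace.sum_castSucc_sq_eq, hw, ← Real.sqrt_sq_eq_abs]
  apply Real.sqrt_le_sqrt
  linarith
end
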